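/- arXiv:1609.09596 — 5 statements merged into one kernel-verified Lean document; each statement's English description precedes it below -/
import Mathlib

section
/- Let 𝒜 be a set of vectors in ℂ^M and suppose Y ∈ ℂ^{M×L} admits a representation Y = Σ_{k=1}^K a_k s_k where a_1,…,a_K ∈ 𝒜 are distinct and each row vector s_k ∈ ℂ^{1×L} is nonzero. If 2K < spark(𝒜) − 1 + rank(Y), then this representation is unique: for any K' ≤ K, any distinct b_1,…,b_{K'} ∈ 𝒜 and any nonzero row vectors t_1,…,t_{K'} ∈ ℂ^{1×L} with Y = Σ_{j=1}^{K'} b_j t_j, one has K' = K and the set of pairs {(b_j, t_j)} equals the set of pairs {(a_k, s_k)}. -/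
/-!
Encode a representation `Y = ∑ a_k s_k` as the finitely supported map `c : a_k ↦ s_k`. If two
representations `c ≠ d` of `Y` exist, let `C` be the union of their supports, `A` the matrix whose
columns are the vectors of `C` and `W` the matrix whose rows are the values of `c - d` on `C`.
Then `A * W = 0` with `W ≠ 0`, so `rank A + rank W ≤ |C|` and `rank W ≥ 1`; hence `C ⊆ 𝒜` is
dependent and `spark 𝒜 ≤ rank A + 1`. The rows of `Y` lie in the span of the values of `c`, which
agree with those of `c - d` off the common support `O`, so `rank Y ≤ rank W + |O|`. Adding up,
`spark 𝒜 - 1 + rank Y ≤ |C| + |O| = K + K' ≤ 2K`.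
-/

open Matrix

/-- The spark of a set `𝒜` of vectors: the smallest cardinality of a finite linearly
dependent subset of `𝒜` (`⊤` if every finite subset is linearly independent). -/
noncomputable def spark {ι : Type*} (𝒜 : Set (ι → ℂ)) : ℕ∞ :=
  sInf {n : ℕ∞ | ∃ S : Finset (ι → ℂ), ↑S ⊆ 𝒜 ∧
    ¬ LinearIndependent ℂ (fun v : {x // x ∈ S} => (v : ι → ℂ)) ∧ n = (S.card : ℕ∞)}

open Finset Submodule Module Function

section OuterSum

variable {ι κ R : Type*} [CommRing R]

/-- A representation `∑ a_k s_k` with distinct `a_k` is encoded by the finitely supported map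
`a_k ↦ s_k`. -/
noncomputable def outerSum (c : (ι → R) →₀ (κ → R)) : Matrix ι κ R :=
  c.sum fun v x => vecMulVec v x

theorem outerSum_sub (c d : (ι → R) →₀ (κ → R)) :
    outerSum (c - d) = outerSum c - outerSum d :=
  Finsupp.sum_sub_index fun v _ _ => vecMulVec_sub v _ _

def columnMatrix (C : Finset (ι → R)) : Matrix ι C R :=
  (Matrix.of fun v : C => (v : ι → R))ᵀ

def coeffMatrix (C : Finset (ι → R)) (f : (ι → R) → κ → R) : Matrix C κ R :=
  Matrix.of fun v => f v

theorem outerSum_eq_columnMatrix_mul {c : (ι → R) →₀ (κ → R)} {C : Finset (ι → R)}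
    (hC : c.support ⊆ C) : outerSum c = columnMatrix C * coeffMatrix C c := by
  ext i l
  rw [outerSum, Finsupp.sum_of_support_subset c hC _ fun v _ => by ext; simp [vecMulVec_apply],
    ← Finset.sum_coe_sort C]
  simp [Matrix.sum_apply, vecMulVec_apply, mul_apply, columnMatrix, coeffMatrix]

end OuterSum

section Rank

variable {ι κ K : Type*} [Field K]

theorem rank_columnMatrix [Fintype ι] (C : Finset (ι → K)) :
    (columnMatrix C).rank = finrank K (span K (C : Set (ι → K))) := by
  rw [columnMatrix, rank_transpose, rank_eq_finrank_span_row]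
  exact congrArg (fun s => finrank K (span K s)) Subtype.range_coe

theorem rank_coeffMatrix [Fintype κ] [DecidableEq (κ → K)] (C : Finset (ι → K))
    (f : (ι → K) → κ → K) :
    (coeffMatrix C f).rank = finrank K (span K (C.image f : Set (κ → K))) := by
  rw [rank_eq_finrank_span_row, coeffMatrix, coe_image, Set.image_eq_range]
  rfl

theorem rank_coeffMatrix_pos [Fintype κ] {C : Finset (ι → K)} {f : (ι → K) → κ → K}
    (hf : ∃ v ∈ C, f v ≠ 0) : 0 < (coeffMatrix C f).rank := by
  classical
  obtain ⟨v, hvC, hv⟩ := hf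
  rw [rank_coeffMatrix, Nat.pos_iff_ne_zero, Ne, Submodule.finrank_eq_zero, span_eq_bot]
  exact fun h => hv (h _ (mem_image_of_mem f hvC))

theorem finrank_span_image_le_add_card {α V : Type*} [AddCommGroup V] [Module K V]
    [DecidableEq V] {f g : α → V} {S O : Finset α} (hfg : ∀ x ∈ S, x ∉ O → f x = g x) :
    finrank K (span K (S.image f : Set V)) ≤ finrank K (span K (S.image g : Set V)) + #O := by
  have hsub : span K (S.image f : Set V) ≤ span K (S.image g) ⊔ span K (O.image f) := by
    rw [span_le]
    intro _ hy
    obtain ⟨x, hx, rfl⟩ := mem_image.mp hy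
    by_cases hxO : x ∈ O
    · exact mem_sup_right (subset_span (mem_image_of_mem f hxO))
    · exact mem_sup_left (subset_span (mem_image.mpr ⟨x, hx, (hfg x hx hxO).symm⟩))
  calc finrank K (span K (S.image f : Set V))
      ≤ finrank K ↥(span K (S.image g : Set V) ⊔ span K (O.image f)) := finrank_mono hsub
    _ ≤ finrank K (span K (S.image g : Set V)) + finrank K (span K (O.image f : Set V)) :=
        finrank_add_le_finrank_add_finrank _ _
    _ ≤ finrank K (span K (S.image g : Set V)) + #O := by
        gcongr
        exact (finrank_span_finset_le_card _).trans card_image_le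

theorem rank_outerSum_le_rank_coeffMatrix_sub_add_card [Fintype κ] [DecidableEq (ι → K)]
    {c d : (ι → K) →₀ (κ → K)} :
    (outerSum c).rank ≤
      (coeffMatrix (c.support ∪ d.support) ⇑(c - d)).rank + #(c.support ∩ d.support) := by
  classical
  calc (outerSum c).rank
      ≤ (coeffMatrix c.support c).rank := by
        rw [outerSum_eq_columnMatrix_mul subset_rfl]; exact rank_mul_le_right _ _
    _ ≤ finrank K (span K (c.support.image ⇑(c - d) : Set (κ → K))) +
          #(c.support ∩ d.support) := by
        rw [rank_coeffMatrix]
        refine finrank_span_image_le_add_card fun v hvc hvO => ?_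
        have hvd : d v = 0 := Finsupp.notMem_support_iff.mp fun h => hvO (mem_inter.mpr ⟨hvc, h⟩)
        simp [hvd]
    _ ≤ _ := by
        rw [rank_coeffMatrix]
        gcongr
        exact finrank_mono (span_mono (coe_subset.mpr (image_subset_image subset_union_left)))

end Rank

section Spark

variable {ι : Type*} {𝒜 : Set (ι → ℂ)}

theorem spark_le_card {S : Finset (ι → ℂ)} (hS : ↑S ⊆ 𝒜)
    (hdep : ¬ LinearIndependent ℂ (fun v : {x // x ∈ S} => (v : ι → ℂ))) :
    spark 𝒜 ≤ #S :=
  sInf_le ⟨S, hS, hdep, rfl⟩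

theorem spark_le_finrank_span_add_one {S : Finset (ι → ℂ)} (hS : ↑S ⊆ 𝒜)
    (hlt : finrank ℂ (span ℂ (S : Set (ι → ℂ))) < #S) :
    spark 𝒜 ≤ finrank ℂ (span ℂ (S : Set (ι → ℂ))) + 1 := by
  obtain ⟨T, hTS, hT⟩ := exists_subset_card_eq hlt
  have hdep : ¬ LinearIndependent ℂ (fun v : {x // x ∈ T} => (v : ι → ℂ)) := by
    intro hli
    have hspan : finrank ℂ (span ℂ (T : Set (ι → ℂ))) = #T := by
      simpa using finrank_span_set_eq_card (s := (T : Set (ι → ℂ))) hli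
    have hmono : finrank ℂ (span ℂ (T : Set (ι → ℂ))) ≤ finrank ℂ (span ℂ (S : Set (ι → ℂ))) :=
      finrank_mono (span_mono (coe_subset.mpr hTS))
    omega
  exact_mod_cast hT ▸ spark_le_card ((coe_subset.mpr hTS).trans hS) hdep

variable [Fintype ι] {κ : Type*} [Fintype κ]

theorem spark_sub_one_add_rank_outerSum_le {c d : (ι → ℂ) →₀ (κ → ℂ)}
    (hc : ↑c.support ⊆ 𝒜) (hd : ↑d.support ⊆ 𝒜) (hcd : outerSum c = outerSum d) (hne : c ≠ d) :
    spark 𝒜 - 1 + (outerSum c).rank ≤ #c.support + #d.support := by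
  classical
  set C := c.support ∪ d.support
  set O := c.support ∩ d.support
  set W := coeffMatrix C ⇑(c - d)
  have hAW : columnMatrix C * W = 0 := by
    rw [← outerSum_eq_columnMatrix_mul Finsupp.support_sub, outerSum_sub, hcd, sub_self]
  have hW : 0 < W.rank := by
    obtain ⟨v, hv⟩ := Finsupp.ne_iff.mp (sub_ne_zero.mpr hne)
    exact rank_coeffMatrix_pos ⟨v, Finsupp.support_sub (Finsupp.mem_support_iff.mpr hv), hv⟩
  have hrank : (columnMatrix C).rank + W.rank ≤ #C := by
    simpa using rank_add_rank_le_card_of_mul_eq_zero hAW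
  have hspark : spark 𝒜 ≤ (columnMatrix C).rank + 1 := by
    have hlt : (columnMatrix C).rank < #C := by omega
    rw [rank_columnMatrix] at hlt ⊢
    exact spark_le_finrank_span_add_one (by simpa [C] using And.intro hc hd) hlt
  have hY : (outerSum c).rank ≤ W.rank + #O := rank_outerSum_le_rank_coeffMatrix_sub_add_card
  have hcard : #C + #O = #c.support + #d.support := card_union_add_card_inter _ _
  calc spark 𝒜 - 1 + (outerSum c).rank
      ≤ ((columnMatrix C).rank + (outerSum c).rank : ℕ) := by
        push_cast; gcongr; exact tsub_le_iff_right.mpr hspark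
    _ ≤ (#c.support + #d.support : ℕ) := Nat.cast_le.mpr (by omega)
    _ = #c.support + #d.support := by push_cast; rfl

theorem eq_of_outerSum_eq {c d : (ι → ℂ) →₀ (κ → ℂ)} (hc : ↑c.support ⊆ 𝒜) (hd : ↑d.support ⊆ 𝒜)
    (hcd : outerSum c = outerSum d)
    (hlt : ((#c.support + #d.support : ℕ) : ℕ∞) < spark 𝒜 - 1 + (outerSum c).rank) : c = d := by
  by_contra hne
  exact (spark_sub_one_add_rank_outerSum_le hc hd hcd hne).not_gt (by exact_mod_cast hlt)

end Spark

section Family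

open Finsupp

variable {α β M : Type*} [Fintype α] [AddCommMonoid M] {a : α → β} {s : α → M}

theorem support_mapDomain_equivFunOnFinite_symm [DecidableEq β] (ha : Injective a)
    (hs : ∀ k, s k ≠ 0) : (mapDomain a (equivFunOnFinite.symm s)).support = univ.image a := by
  rw [mapDomain_support_of_injective ha]
  congr
  ext k
  simpa using hs k

theorem coe_graph_mapDomain_equivFunOnFinite_symm (ha : Injective a) (hs : ∀ k, s k ≠ 0) :
    ((mapDomain a (equivFunOnFinite.symm s)).graph : Set (β × M)) =
      Set.range fun k => (a k, s k) := by
  ext ⟨x, m⟩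
  simp only [Finset.mem_coe, mk_mem_graph_iff, Set.mem_range, Prod.mk.injEq]
  constructor
  · rintro ⟨hx, hm⟩
    by_cases hxa : x ∈ Set.range a
    · obtain ⟨k, rfl⟩ := hxa
      exact ⟨k, rfl, by simpa [mapDomain_apply ha] using hx⟩
    · exact absurd (hx.symm.trans (mapDomain_of_notMem_range _ _ hxa)) hm
  · rintro ⟨k, rfl, rfl⟩
    exact ⟨by simp [mapDomain_apply ha], hs k⟩

theorem outerSum_mapDomain_equivFunOnFinite_symm {ι κ R : Type*} [CommRing R]
    {a : α → ι → R} (ha : Injective a) (s : α → κ → R) :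
    outerSum (mapDomain a (equivFunOnFinite.symm s)) = ∑ k, vecMulVec (a k) (s k) := by
  rw [outerSum, Finsupp.sum_mapDomain_index_inj ha,
    Finsupp.sum_fintype _ _ fun k => by ext; simp [vecMulVec_apply]]
  rfl

end Family

theorem stmt0 {M L K : ℕ} (𝒜 : Set (Fin M → ℂ))
    (a : Fin K → (Fin M → ℂ)) (s : Fin K → (Fin L → ℂ))
    (ha : ∀ k, a k ∈ 𝒜) (hainj : Function.Injective a) (hs : ∀ k, s k ≠ 0)
    (Y : Matrix (Fin M) (Fin L) ℂ)
    (hY : Y = ∑ k, Matrix.vecMulVec (a k) (s k))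
    (hcond : ((2 * K : ℕ) : ℕ∞) < spark 𝒜 - 1 + (Y.rank : ℕ∞))
    (K' : ℕ) (hK' : K' ≤ K)
    (b : Fin K' → (Fin M → ℂ)) (t : Fin K' → (Fin L → ℂ))
    (hb : ∀ j, b j ∈ 𝒜) (hbinj : Function.Injective b) (ht : ∀ j, t j ≠ 0)
    (hY' : Y = ∑ j, Matrix.vecMulVec (b j) (t j)) :
    K' = K ∧
      Set.range (fun j => (b j, t j)) = Set.range (fun k => (a k, s k)) := by
  classical
  set c := Finsupp.mapDomain a (Finsupp.equivFunOnFinite.symm s)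
  set d := Finsupp.mapDomain b (Finsupp.equivFunOnFinite.symm t)
  have hc : c.support = univ.image a := support_mapDomain_equivFunOnFinite_symm hainj hs
  have hd : d.support = univ.image b := support_mapDomain_equivFunOnFinite_symm hbinj ht
  have hcY : outerSum c = Y := by rw [hY, outerSum_mapDomain_equivFunOnFinite_symm hainj]
  have hdY : outerSum d = Y := by rw [hY', outerSum_mapDomain_equivFunOnFinite_symm hbinj]
  have hcK : #c.support = K := by rw [hc, card_image_of_injective _ hainj, card_fin]
  have hdK : #d.support = K' := by rw [hd, card_image_of_injective _ hbinj, card_fin]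
  have hcd : c = d := by
    refine eq_of_outerSum_eq (by simpa [hc, Set.range_subset_iff] using ha)
      (by simpa [hd, Set.range_subset_iff] using hb) (hcY.trans hdY.symm) ?_
    rw [hcY, hcK, hdK]
    exact lt_of_le_of_lt (Nat.cast_le.mpr (by omega)) hcond
  refine ⟨by rw [← hcK, ← hdK, hcd], ?_⟩
  rw [← coe_graph_mapDomain_equivFunOnFinite_symm hainj hs,
    ← coe_graph_mapDomain_equivFunOnFinite_symm hbinj ht]
  exact congrArg (fun e => (e.graph : Set ((Fin M → ℂ) × (Fin L → ℂ)))) hcd.symm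
end

section
/- Let A ∈ ℂ^{M×n}, let K ≥ 1, let x₀ ∈ ℂ^n satisfy ‖x₀‖_0 ≤ K, and set y = A x₀. If δ_{2K}(A) < √2 − 1, then x₀ is the unique minimizer of ‖x‖_0 over {x ∈ ℂ^n : Ax = y} and also the unique minimizer of ‖x‖_1 over {x ∈ ℂ^n : Ax = y}. -/
open Matrix

/-- The ℓ0 "norm" of a vector: the number of its nonzero entries. -/
noncomputable def l0 {n : ℕ} (x : Fin n → ℂ) : ℕ := {j : Fin n | x j ≠ 0}.ncard

/-- The ℓ1 norm of a complex vector. -/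
noncomputable def l1 {n : ℕ} (x : Fin n → ℂ) : ℝ := ∑ j, ‖x j‖

/-- The `K`-restricted isometry constant of `A`: the smallest `δ ≥ 0` such that
`(1−δ)‖v‖² ≤ ‖Av‖² ≤ (1+δ)‖v‖²` for all `K`-sparse `v`. -/
noncomputable def RIC {M n : ℕ} (A : Matrix (Fin M) (Fin n) ℂ) (K : ℕ) : ℝ :=
  sInf {δ : ℝ | 0 ≤ δ ∧ ∀ v : Fin n → ℂ, l0 v ≤ K →
    (1 - δ) * (∑ j, Complex.normSq (v j)) ≤ (∑ i, Complex.normSq (A.mulVec v i)) ∧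
    (∑ i, Complex.normSq (A.mulVec v i)) ≤ (1 + δ) * (∑ j, Complex.normSq (v j))}

/-!
Let `h = x - x₀ ∈ ker A` and let `S` be the support of `x₀`. A restricted isometry on `2K`-sparse
vectors is injective on them, which gives the `ℓ⁰` claim. If `‖x‖₁ ≤ ‖x₀‖₁`, then
`‖h_{Sᶜ}‖₁ ≤ ‖h_S‖₁`. Cut `h_{Sᶜ}`, sorted by decreasing modulus, into blocks `T₀, T₁, …` of size
`K`. Every entry of `T_{j+1}` is at most the mean modulus on `T_j`, so
`√K ‖h_{T_{j+1}}‖₂ ≤ ‖h_{T_j}‖₁` and `Σ_{j ≥ 1} ‖h_{T_j}‖₂ ≤ ‖h_{Sᶜ}‖₁ / √K ≤ ‖h_S‖₂`.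
Now `A (h_S + h_{T₀}) = -Σ_{j ≥ 1} A h_{T_j}`, and polarization turns the isometry constant into
`|Re ⟪A u, A v⟫| ≤ δ ‖u‖ ‖v‖` for disjointly supported `K`-sparse `u, v`. With `α = ‖h_S‖₂` and
`β = ‖h_{T₀}‖₂` this gives `(1 - δ) (α² + β²) ≤ ‖A (h_S + h_{T₀})‖² ≤ δ (α + β) α`, which forces
`α = 0` when `δ < √2 - 1`, and then `h = 0`.
-/

open Finset

namespace SparseRecovery

section Sparsity

variable {n : ℕ}

lemma l0_eq_card (x : Fin n → ℂ) : l0 x = #{i | x i ≠ 0} := by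
  rw [l0, ← Set.ncard_coe_finset]
  simp

lemma l0_le_card {x : Fin n → ℂ} {S : Finset (Fin n)} (hx : ∀ i ∉ S, x i = 0) : l0 x ≤ #S := by
  rw [l0, ← Set.ncard_coe_finset]
  exact Set.ncard_le_ncard (fun i hi => by_contra fun hiS => hi (hx i hiS))

lemma l0_add_le (x y : Fin n → ℂ) : l0 (x + y) ≤ l0 x + l0 y :=
  (Set.ncard_le_ncard (Function.support_add x y)).trans (Set.ncard_union_le _ _)

lemma l0_smul_le (c : ℂ) (x : Fin n → ℂ) : l0 (c • x) ≤ l0 x :=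
  Set.ncard_le_ncard (Function.support_const_smul_subset c x)

lemma l0_neg (x : Fin n → ℂ) : l0 (-x) = l0 x := by
  simp [l0]

lemma l0_sub_le (x y : Fin n → ℂ) : l0 (x - y) ≤ l0 x + l0 y := by
  simpa [sub_eq_add_neg, l0_neg] using l0_add_le x (-y)

end Sparsity

section Blocks

lemma card_mul_sum_sq_le_sq_sum {ι : Type*} {s t : Finset ι} {f : ι → ℝ} {K : ℕ}
    (ht : #t ≤ K) (hs : t.Nonempty → K ≤ #s) (hf : ∀ j ∈ t, 0 ≤ f j)
    (hst : ∀ i ∈ s, ∀ j ∈ t, f j ≤ f i) :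
    K * ∑ j ∈ t, f j ^ 2 ≤ (∑ i ∈ s, f i) ^ 2 := by
  rcases t.eq_empty_or_nonempty with rfl | hne
  · simp [sq_nonneg]
  rcases K.eq_zero_or_pos with rfl | hK
  · simp [sq_nonneg]
  have hpt : ∀ j ∈ t, (K * f j) ^ 2 ≤ (∑ i ∈ s, f i) ^ 2 := by
    intro j hj
    refine pow_le_pow_left₀ (mul_nonneg K.cast_nonneg (hf j hj)) ?_ 2
    calc K * f j ≤ #s * f j := mul_le_mul_of_nonneg_right (by exact_mod_cast hs hne) (hf j hj)
      _ = ∑ _i ∈ s, f j := by rw [sum_const, nsmul_eq_mul]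
      _ ≤ ∑ i ∈ s, f i := sum_le_sum fun i hi => hst i hi j hj
  have hsum : (K : ℝ) * (K * ∑ j ∈ t, f j ^ 2) ≤ K * (∑ i ∈ s, f i) ^ 2 :=
    calc (K : ℝ) * (K * ∑ j ∈ t, f j ^ 2) = ∑ j ∈ t, (K * f j) ^ 2 := by
          rw [mul_sum, mul_sum]
          exact sum_congr rfl fun j _ => by ring
      _ ≤ #t * (∑ i ∈ s, f i) ^ 2 := by
          simpa [sum_const, nsmul_eq_mul] using sum_le_sum hpt
      _ ≤ K * (∑ i ∈ s, f i) ^ 2 := by gcongr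
  exact le_of_mul_le_mul_left hsum (by exact_mod_cast hK)

lemma filter_range_div_eq {K : ℕ} (hK : 0 < K) (n j : ℕ) :
    {t ∈ range n | t / K = j} = Ico (j * K) (min n (j * K + K)) := by
  ext t
  simp only [mem_filter, mem_range, mem_Ico, Nat.div_eq_iff hK]
  omega

lemma card_filter_div_eq {K : ℕ} (hK : 0 < K) (n j : ℕ) :
    #{m : Fin n | (m : ℕ) / K = j} = min n (j * K + K) - j * K := by
  rw [card_filter, Fin.sum_univ_eq_sum_range (fun t => if t / K = j then 1 else 0),
    ← card_filter, filter_range_div_eq hK, Nat.card_Ico]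

lemma exists_blocks {n K : ℕ} (hK : 0 < K) (f : Fin n → ℝ) (hf : ∀ i, 0 ≤ f i) :
    ∃ b : Fin n → ℕ, (∀ i, b i < n) ∧ (∀ j, #{i | b i = j} ≤ K) ∧
      ∀ j, K * ∑ i with b i = j + 1, f i ^ 2 ≤ (∑ i with b i = j, f i) ^ 2 := by
  set σ := Tuple.sort fun i => -f i
  have hanti : Antitone (f ∘ σ) := fun m m' h => by
    simpa using Tuple.monotone_sort (fun i => -f i) h
  have hfiber : ∀ {M : Type} [AddCommMonoid M] (j : ℕ) (F : Fin n → M),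
      ∑ i with (σ.symm i : ℕ) / K = j, F i =
        ∑ m ∈ univ.filter fun m : Fin n => (m : ℕ) / K = j, F (σ m) := by
    intro M _ j F
    rw [sum_filter, sum_filter, ← Equiv.sum_comp σ]
    simp
  refine ⟨fun i => (σ.symm i : ℕ) / K, fun i => (Nat.div_le_self _ _).trans_lt (σ.symm i).isLt,
    fun j => ?_, fun j => ?_⟩
  · rw [card_eq_sum_ones, hfiber, ← card_eq_sum_ones, card_filter_div_eq hK]
    omega
  · simp only [hfiber]
    refine card_mul_sum_sq_le_sq_sum ?_ ?_ (fun _ _ => hf _) ?_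
    · rw [card_filter_div_eq hK]; omega
    · rintro ⟨m, hm⟩
      have := m.isLt
      simp only [mem_filter, mem_univ, true_and, Nat.div_eq_iff hK, add_one_mul] at hm
      rw [card_filter_div_eq hK]
      omega
    · intro m hm m' hm'
      simp only [mem_filter, mem_univ, true_and, Nat.div_eq_iff hK, add_one_mul] at hm hm'
      exact hanti (Fin.le_def.2 (by omega))

end Blocks

section Restrict

variable {ι : Type*}

lemma inner_eq_zero_of_disjoint [Fintype ι] {x y : EuclideanSpace ℂ ι}
    (hxy : ∀ i, x i = 0 ∨ y i = 0) : inner ℂ x y = 0 := by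
  rw [PiLp.inner_apply]
  exact sum_eq_zero fun i _ => by rcases hxy i with h | h <;> simp [h]

variable [DecidableEq ι]

def restrict (S : Finset ι) (x : EuclideanSpace ℂ ι) : EuclideanSpace ℂ ι :=
  WithLp.toLp 2 fun i => if i ∈ S then x i else 0

@[simp]
lemma restrict_apply (S : Finset ι) (x : EuclideanSpace ℂ ι) (i : ι) :
    restrict S x i = if i ∈ S then x i else 0 :=
  rfl

lemma restrict_add_restrict_compl [Fintype ι] (S : Finset ι) (x : EuclideanSpace ℂ ι) :
    restrict S x + restrict Sᶜ x = x := by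
  ext i
  by_cases hi : i ∈ S <;> simp [hi]

variable [Fintype ι]

lemma sum_norm_restrict (S : Finset ι) (x : EuclideanSpace ℂ ι) :
    ∑ i, ‖restrict S x i‖ = ∑ i ∈ S, ‖x i‖ := by
  simp [apply_ite, sum_ite_mem]

lemma norm_restrict_sq (S : Finset ι) (x : EuclideanSpace ℂ ι) :
    ‖restrict S x‖ ^ 2 = ∑ i ∈ S, ‖x i‖ ^ 2 := by
  rw [EuclideanSpace.norm_sq_eq]
  simp [apply_ite, sum_ite_mem]

lemma sum_norm_le_sqrt_card_mul_norm_restrict (S : Finset ι) (x : EuclideanSpace ℂ ι) :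
    ∑ i ∈ S, ‖x i‖ ≤ √(#S : ℝ) * ‖restrict S x‖ := by
  refine (pow_le_pow_iff_left₀ (sum_nonneg fun _ _ => norm_nonneg _) (by positivity)
    two_ne_zero).1 ?_
  rw [mul_pow, Real.sq_sqrt (Nat.cast_nonneg _), norm_restrict_sq]
  exact sq_sum_le_card_mul_sum_sq

lemma sum_restrict_fiber {κ : Type*} [DecidableEq κ] {t : Finset κ} {b : ι → κ}
    (hb : ∀ i, b i ∈ t) (x : EuclideanSpace ℂ ι) :
    ∑ j ∈ t, restrict {i | b i = j} x = x := by
  ext i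
  simp [WithLp.ofLp_sum, hb]

lemma l0_restrict_le {n : ℕ} (S : Finset (Fin n)) (x : EuclideanSpace ℂ (Fin n)) :
    l0 (restrict S x).ofLp ≤ #S :=
  l0_le_card fun i hi => by simp [hi]

end Restrict

section RestrictedIsometry

variable {n : ℕ} {F : Type*} [NormedAddCommGroup F] [InnerProductSpace ℂ F]

def IsRestrictedIsometry (L : EuclideanSpace ℂ (Fin n) →ₗ[ℂ] F) (K : ℕ) (δ : ℝ) : Prop :=
  ∀ x : EuclideanSpace ℂ (Fin n), l0 x.ofLp ≤ K → |‖L x‖ ^ 2 - ‖x‖ ^ 2| ≤ δ * ‖x‖ ^ 2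

namespace IsRestrictedIsometry

variable {L : EuclideanSpace ℂ (Fin n) →ₗ[ℂ] F} {K : ℕ} {δ : ℝ}

lemma eq_zero_of_map_eq_zero (hL : IsRestrictedIsometry L K δ) (hδ : δ < 1)
    {x : EuclideanSpace ℂ (Fin n)} (hx : l0 x.ofLp ≤ K) (hLx : L x = 0) : x = 0 := by
  have h := hL x hx
  rw [hLx, norm_zero, zero_pow two_ne_zero, zero_sub, abs_neg,
    abs_of_nonneg (by positivity)] at h
  have : ‖x‖ ^ 2 = 0 := by nlinarith [sq_nonneg ‖x‖]
  simpa using this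

lemma two_mul_re_inner_le (hL : IsRestrictedIsometry L K δ) {u w : EuclideanSpace ℂ (Fin n)}
    (huw : inner ℂ u w = 0) (hK : l0 u.ofLp + l0 w.ofLp ≤ K) :
    2 * (inner ℂ (L u) (L w)).re ≤ δ * (‖u‖ ^ 2 + ‖w‖ ^ 2) := by
  have h_add := (abs_le.1 (hL (u + w) ((l0_add_le _ _).trans hK))).2
  have h_sub := (abs_le.1 (hL (u - w) ((l0_sub_le _ _).trans hK))).1
  rw [map_add, norm_add_sq (𝕜 := ℂ) (L u), norm_add_sq (𝕜 := ℂ) u, huw] at h_add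
  rw [map_sub, norm_sub_sq (𝕜 := ℂ) (L u), norm_sub_sq (𝕜 := ℂ) u, huw] at h_sub
  simp only [map_zero, RCLike.re_to_complex] at h_add h_sub
  linarith

lemma abs_re_inner_le (hL : IsRestrictedIsometry L K δ) {a b : EuclideanSpace ℂ (Fin n)}
    (hab : ∀ i, a i = 0 ∨ b i = 0) (hK : l0 a.ofLp + l0 b.ofLp ≤ K) :
    |(inner ℂ (L a) (L b)).re| ≤ δ * ‖a‖ * ‖b‖ := by
  -- `‖b‖ • a` and `±‖a‖ • b` have the same norm, so the polarization bound is sharp for them.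
  have key : ∀ t : ℝ, |t| = ‖a‖ →
      ‖b‖ * t * (inner ℂ (L a) (L b)).re ≤ δ * ‖a‖ ^ 2 * ‖b‖ ^ 2 := by
    intro t ht
    have h := hL.two_mul_re_inner_le (u := (‖b‖ : ℂ) • a) (w := (t : ℂ) • b)
      (by simp [inner_eq_zero_of_disjoint hab])
      ((add_le_add (l0_smul_le _ _) (l0_smul_le _ _)).trans hK)
    simp only [map_smul, inner_smul_left, inner_smul_right, norm_smul, Complex.conj_ofReal,
      Complex.norm_real, Real.norm_eq_abs, abs_norm, ht] at h
    simp only [Complex.re_ofReal_mul] at h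
    nlinarith
  rcases (norm_nonneg a).eq_or_lt with ha | ha
  · simp [norm_eq_zero.1 ha.symm]
  rcases (norm_nonneg b).eq_or_lt with hb | hb
  · simp [norm_eq_zero.1 hb.symm]
  have h_add := key ‖a‖ (abs_norm a)
  have h_sub := key (-‖a‖) (by rw [abs_neg, abs_norm])
  rw [abs_le]
  constructor <;> nlinarith [mul_pos ha hb]

lemma one_sub_mul_le_norm_map_sq (hL : IsRestrictedIsometry L K δ)
    {a c : EuclideanSpace ℂ (Fin n)} (hac : ∀ i, a i = 0 ∨ c i = 0)
    (hK : l0 a.ofLp + l0 c.ofLp ≤ K) :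
    (1 - δ) * (‖a‖ ^ 2 + ‖c‖ ^ 2) ≤ ‖L (a + c)‖ ^ 2 := by
  have h := (abs_le.1 (hL (a + c) ((l0_add_le a.ofLp c.ofLp).trans hK))).1
  rw [norm_add_sq (𝕜 := ℂ), inner_eq_zero_of_disjoint hac] at h
  simp only [map_zero] at h
  linarith

lemma norm_map_sq_le_of_map_add_sum_eq_zero (hL : IsRestrictedIsometry L (2 * K) δ)
    {a c : EuclideanSpace ℂ (Fin n)} {w : ℕ → EuclideanSpace ℂ (Fin n)} {N : ℕ}
    (hzero : L (a + c + ∑ j ∈ range N, w j) = 0) (ha : l0 a.ofLp ≤ K) (hc : l0 c.ofLp ≤ K)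
    (hw : ∀ j, l0 (w j).ofLp ≤ K) (haw : ∀ j i, a i = 0 ∨ w j i = 0)
    (hcw : ∀ j i, c i = 0 ∨ w j i = 0) :
    ‖L (a + c)‖ ^ 2 ≤ δ * (‖a‖ + ‖c‖) * ∑ j ∈ range N, ‖w j‖ := by
  have hterm : ∀ j, -(inner ℂ (L (a + c)) (L (w j))).re ≤ δ * (‖a‖ + ‖c‖) * ‖w j‖ := by
    intro j
    have h₁ := hL.abs_re_inner_le (haw j) (by linarith [hw j])
    have h₂ := hL.abs_re_inner_le (hcw j) (by linarith [hw j])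
    rw [map_add, inner_add_left, Complex.add_re]
    linarith [neg_abs_le (inner ℂ (L a) (L (w j))).re, neg_abs_le (inner ℂ (L c) (L (w j))).re]
  have hneg : L (a + c) = -∑ j ∈ range N, L (w j) := by
    rw [eq_neg_iff_add_eq_zero, ← map_sum, ← map_add, hzero]
  calc ‖L (a + c)‖ ^ 2 = (inner ℂ (L (a + c)) (L (a + c))).re :=
        (inner_self_eq_norm_sq (𝕜 := ℂ) _).symm
    _ = ∑ j ∈ range N, -(inner ℂ (L (a + c)) (L (w j))).re := by
        nth_rewrite 2 [hneg]
        rw [inner_neg_right, inner_sum, Complex.neg_re, Complex.re_sum, ← sum_neg_distrib]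
    _ ≤ δ * (‖a‖ + ‖c‖) * ∑ j ∈ range N, ‖w j‖ := by
        rw [mul_sum]
        exact sum_le_sum fun j _ => hterm j

end IsRestrictedIsometry

lemma sum_normSq_eq_norm_sq {ι : Type*} [Fintype ι] (v : ι → ℂ) :
    ∑ i, Complex.normSq (v i) = ‖(WithLp.toLp 2 v : EuclideanSpace ℂ ι)‖ ^ 2 := by
  simp [EuclideanSpace.norm_sq_eq, Complex.sq_norm]

lemma exists_isRestrictedIsometry_of_RIC_lt {M : ℕ} (A : Matrix (Fin M) (Fin n) ℂ) (K : ℕ)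
    {c : ℝ} (h : RIC A K < c) :
    ∃ δ, 0 ≤ δ ∧ δ < c ∧ IsRestrictedIsometry (toEuclideanLin A) K δ := by
  -- `RIC` is an `sInf`, which is `0` for an empty set: exhibit a member first.
  set L := LinearMap.toContinuousLinearMap (toEuclideanLin A)
  have hbound : ∀ v : Fin n → ℂ,
      (1 - (‖L‖ ^ 2 + 1)) * ∑ j, Complex.normSq (v j) ≤ ∑ i, Complex.normSq ((A *ᵥ v) i) ∧
        ∑ i, Complex.normSq ((A *ᵥ v) i) ≤ (1 + (‖L‖ ^ 2 + 1)) * ∑ j, Complex.normSq (v j) := by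
    intro v
    rw [sum_normSq_eq_norm_sq, sum_normSq_eq_norm_sq]
    have hA : ‖(WithLp.toLp 2 (A *ᵥ v) : EuclideanSpace ℂ (Fin M))‖ ≤ ‖L‖ * ‖WithLp.toLp 2 v‖ :=
      L.le_opNorm _
    replace hA := pow_le_pow_left₀ (norm_nonneg _) hA 2
    constructor <;> nlinarith [sq_nonneg ‖L‖, sq_nonneg ‖WithLp.toLp 2 v‖]
  unfold RIC at h
  obtain ⟨δ, ⟨hδ0, hδ⟩, hδc⟩ := exists_lt_of_csInf_lt
    (by exact ⟨_, by positivity, fun v _ => hbound v⟩) h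
  refine ⟨δ, hδ0, hδc, fun x hx => abs_le.2 ?_⟩
  obtain ⟨h₁, h₂⟩ := hδ x.ofLp hx
  have hAx : (WithLp.toLp 2 (A *ᵥ x.ofLp) : EuclideanSpace ℂ (Fin M)) = toEuclideanLin A x := rfl
  simp only [sum_normSq_eq_norm_sq, WithLp.toLp_ofLp, hAx] at h₁ h₂
  constructor <;> linarith

end RestrictedIsometry

section NullSpaceProperty

variable {n : ℕ}

lemma sqrt_mul_sum_norm_restrict_le {K : ℕ} (x : EuclideanSpace ℂ (Fin n)) {b : Fin n → ℕ}
    (hb : ∀ i, b i < n)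
    (hblock : ∀ j, K * ∑ i with b i = j + 1, ‖x i‖ ^ 2 ≤ (∑ i with b i = j, ‖x i‖) ^ 2) :
    √K * ∑ j ∈ range n, ‖restrict {i | b i = j + 1} x‖ ≤ ∑ i, ‖x i‖ := by
  have hj : ∀ j, √K * ‖restrict {i | b i = j + 1} x‖ ≤ ∑ i with b i = j, ‖x i‖ := by
    intro j
    refine (pow_le_pow_iff_left₀ (by positivity) (sum_nonneg fun _ _ => norm_nonneg _)
      two_ne_zero).1 ?_
    rw [mul_pow, Real.sq_sqrt (Nat.cast_nonneg _), norm_restrict_sq]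
    exact hblock j
  calc √K * ∑ j ∈ range n, ‖restrict {i | b i = j + 1} x‖
      ≤ ∑ j ∈ range n, ∑ i with b i = j, ‖x i‖ := by
        rw [mul_sum]
        exact sum_le_sum fun j _ => hj j
    _ = ∑ i, ‖x i‖ := sum_fiberwise_of_maps_to (fun i _ => mem_range.2 (hb i)) _

lemma eq_zero_of_one_sub_mul_le {δ α β : ℝ} (hδ0 : 0 ≤ δ) (hδ : δ < √2 - 1)
    (h : (1 - δ) * (α ^ 2 + β ^ 2) ≤ δ * (α + β) * α) : α = 0 := by
  have hs : √2 ^ 2 = 2 := Real.sq_sqrt (by norm_num)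
  have hs1 : 1 < √2 := by nlinarith [Real.sqrt_nonneg 2]
  have hab : 2 * (α + β) * α ≤ (1 + √2) * (α ^ 2 + β ^ 2) := by
    nlinarith [sq_nonneg ((√2 - 1) * α - β)]
  have hc : 0 < 2 - (3 + √2) * δ := by nlinarith
  have hq : (2 - (3 + √2) * δ) * (α ^ 2 + β ^ 2) ≤ 0 := by
    nlinarith [mul_le_mul_of_nonneg_left hab hδ0]
  have hq' : α ^ 2 + β ^ 2 ≤ 0 := nonpos_of_mul_nonpos_right hq hc
  nlinarith [sq_nonneg α, sq_nonneg β]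

theorem IsRestrictedIsometry.eq_zero_of_sum_compl_le {F : Type*} [NormedAddCommGroup F]
    [InnerProductSpace ℂ F] {L : EuclideanSpace ℂ (Fin n) →ₗ[ℂ] F} {K : ℕ} {δ : ℝ}
    (hL : IsRestrictedIsometry L (2 * K) δ) (hδ0 : 0 ≤ δ) (hδ : δ < √2 - 1) (hK : 0 < K)
    {h : EuclideanSpace ℂ (Fin n)} (hLh : L h = 0) {S : Finset (Fin n)} (hS : #S ≤ K)
    (hcone : ∑ i ∈ Sᶜ, ‖h i‖ ≤ ∑ i ∈ S, ‖h i‖) : h = 0 := by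
  set g := restrict Sᶜ h
  obtain ⟨b, hb, hcard, hblock⟩ := exists_blocks hK (fun i => ‖g i‖) fun _ => norm_nonneg _
  set a := restrict S h
  set v : ℕ → EuclideanSpace ℂ (Fin n) := fun j => restrict {i | b i = j} g
  have hdecomp : a + v 0 + ∑ j ∈ range n, v (j + 1) = h := by
    rw [add_assoc, add_comm (v 0), ← sum_range_succ',
      sum_restrict_fiber (fun i => mem_range.2 ((hb i).trans n.lt_succ_self)),
      restrict_add_restrict_compl]
  have hl0a : l0 a.ofLp ≤ K := (l0_restrict_le S h).trans hS
  have hl0v : ∀ j, l0 (v j).ofLp ≤ K := fun j => (l0_restrict_le _ _).trans (hcard j)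
  have hdisj_a : ∀ j i, a i = 0 ∨ v j i = 0 := by
    intro j i
    by_cases hi : i ∈ S <;> simp [a, v, g, hi]
  have hdisj_v : ∀ j i, v 0 i = 0 ∨ v (j + 1) i = 0 := by
    intro j i
    by_cases hi : b i = 0 <;> simp [v, hi]
  have hlower := hL.one_sub_mul_le_norm_map_sq (hdisj_a 0) (by linarith [hl0v 0])
  have hupper := hL.norm_map_sq_le_of_map_add_sum_eq_zero (hdecomp ▸ hLh) hl0a (hl0v 0)
    (fun j => hl0v (j + 1)) (fun j => hdisj_a (j + 1)) hdisj_v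
  have hhead : ∑ i ∈ S, ‖h i‖ ≤ √K * ‖a‖ :=
    (sum_norm_le_sqrt_card_mul_norm_restrict S h).trans (by gcongr)
  have htail : ∑ j ∈ range n, ‖v (j + 1)‖ ≤ ‖a‖ := by
    have := sqrt_mul_sum_norm_restrict_le g hb hblock
    rw [sum_norm_restrict] at this
    exact le_of_mul_le_mul_left (this.trans (hcone.trans hhead)) (by positivity)
  have ha : ‖a‖ = 0 := eq_zero_of_one_sub_mul_le hδ0 hδ (hlower.trans (hupper.trans (by gcongr)))
  have hsum : ∑ i, ‖h i‖ = 0 := by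
    rw [← sum_add_sum_compl S]
    rw [ha, mul_zero] at hhead
    linarith [sum_nonneg fun i (_ : i ∈ Sᶜ) => norm_nonneg (h i),
      sum_nonneg fun i (_ : i ∈ S) => norm_nonneg (h i)]
  ext i
  simpa using (sum_eq_zero_iff_of_nonneg fun i _ => norm_nonneg (h i)).1 hsum i (mem_univ i)

end NullSpaceProperty

lemma sum_compl_norm_sub_le {ι E : Type*} [Fintype ι] [DecidableEq ι] [SeminormedAddCommGroup E]
    (S : Finset ι) {x x₀ : ι → E} (hx₀ : ∀ i ∉ S, x₀ i = 0) (hx : ∑ i, ‖x i‖ ≤ ∑ i, ‖x₀ i‖) :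
    ∑ i ∈ Sᶜ, ‖x i - x₀ i‖ ≤ ∑ i ∈ S, ‖x i - x₀ i‖ := by
  have hSc : ∀ i ∈ Sᶜ, x₀ i = 0 := fun i hi => hx₀ i (mem_compl.1 hi)
  have h₁ : ∑ i ∈ Sᶜ, ‖x i - x₀ i‖ = ∑ i ∈ Sᶜ, ‖x i‖ :=
    sum_congr rfl fun i hi => by rw [hSc i hi, sub_zero]
  have h₂ : ∑ i ∈ Sᶜ, ‖x₀ i‖ = 0 := sum_eq_zero fun i hi => by rw [hSc i hi, norm_zero]
  have h₃ : ∑ i ∈ S, ‖x₀ i‖ ≤ ∑ i ∈ S, (‖x i‖ + ‖x i - x₀ i‖) :=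
    sum_le_sum fun i _ => norm_le_norm_add_norm_sub _ _
  rw [← sum_add_sum_compl S, ← sum_add_sum_compl S (fun i => ‖x₀ i‖)] at hx
  rw [sum_add_distrib] at h₃
  linarith

end SparseRecovery

open SparseRecovery in
theorem stmt2 {M n : ℕ} (A : Matrix (Fin M) (Fin n) ℂ)
    (K : ℕ) (hK : 1 ≤ K)
    (x₀ : Fin n → ℂ) (hx₀ : l0 x₀ ≤ K)
    (y : Fin M → ℂ) (hy : y = A.mulVec x₀)
    (hδ : RIC A (2 * K) < Real.sqrt 2 - 1) :
    (∀ x : Fin n → ℂ, A.mulVec x = y → x ≠ x₀ → l0 x₀ < l0 x) ∧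
    (∀ x : Fin n → ℂ, A.mulVec x = y → x ≠ x₀ → l1 x₀ < l1 x) := by
  obtain ⟨δ, hδ0, hδlt, hL⟩ := exists_isRestrictedIsometry_of_RIC_lt A (2 * K) hδ
  have hker : ∀ x, A *ᵥ x = y → toEuclideanLin A (WithLp.toLp 2 (x - x₀)) = 0 := by
    intro x hx
    change WithLp.toLp 2 (A *ᵥ (x - x₀)) = 0
    rw [mulVec_sub, hx, hy, sub_self]
    rfl
  refine ⟨fun x hx hne => ?_, fun x hx hne => ?_⟩
  · by_contra! hle
    have hδ1 : δ < 1 := by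
      have : √2 < 2 := by rw [Real.sqrt_lt' two_pos]; norm_num
      linarith
    exact hne (sub_eq_zero.1 (congrArg WithLp.ofLp
      (hL.eq_zero_of_map_eq_zero hδ1 ((l0_sub_le x x₀).trans (by omega)) (hker x hx))))
  · by_contra! hle
    set S : Finset (Fin n) := {i | x₀ i ≠ 0}
    have hcone := sum_compl_norm_sub_le S (fun i hi => by simpa [S] using hi) hle
    exact hne (sub_eq_zero.1 (congrArg WithLp.ofLp (hL.eq_zero_of_sum_compl_le hδ0 hδlt hK
      (hker x hx) (by rwa [← l0_eq_card]) hcone)))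
end

section
/- Let A ∈ ℂ^{M×n}, X₀ ∈ ℂ^{n×L}, and Y = A X₀. If 2·‖X₀‖_{2,0} < spark(A) − 1 + rank(Y), then X₀ is the unique minimizer of ‖X‖_{2,0} over {X ∈ ℂ^{n×L} : AX = Y}; in particular every X with AX = Y and ‖X‖_{2,0} ≤ ‖X₀‖_{2,0} equals X₀. -/
open Matrix

/-- The number of nonzero rows of a matrix (the ℓ2,0 norm). -/
noncomputable def l20 {n L : ℕ} (X : Matrix (Fin n) (Fin L) ℂ) : ℕ :=
  {i : Fin n | X i ≠ 0}.ncard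

/-- The spark of a matrix `A`: the smallest number of columns of `A` that are
linearly dependent, i.e. `min {‖v‖₀ : v ≠ 0, Av = 0}` (`⊤` if `A` has trivial kernel). -/
noncomputable def sparkM {M n : ℕ} (A : Matrix (Fin M) (Fin n) ℂ) : ℕ∞ :=
  sInf {k : ℕ∞ | ∃ v : Fin n → ℂ, v ≠ 0 ∧ A.mulVec v = 0 ∧ k = (l0 v : ℕ∞)}

/-! If `X ≠ X₀` is another solution with at most as many nonzero rows, then `N = X₀ - X` is
nonzero, `A N = 0`, and the rows of `N` vanish outside `S ∪ S₀`, the union of the row supports of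
`X` and `X₀`. The column space of `N` has dimension `d = rank N` and lies in `ker A`, so it contains
a nonzero vector vanishing on `d - 1` chosen rows of that support: `spark A ≤ |S ∪ S₀| - d + 1`.
The rows of `X₀` outside `S ∩ S₀` are zero or rows of `N`, so `rank Y ≤ rank X₀ ≤ |S ∩ S₀| + d`.
Adding up, `spark A - 1 + rank Y ≤ |S ∪ S₀| + |S ∩ S₀| = |S| + |S₀| ≤ 2 ‖X₀‖₂,₀`. -/

open Set Module Submodule

theorem Submodule.exists_ne_zero_forall_eq_zero_of_ncard_lt_finrank {F ι : Type*} [Field F]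
    [Finite ι] (K : Submodule F (ι → F)) (R : Set ι) (h : R.ncard < finrank F K) :
    ∃ v ∈ K, v ≠ 0 ∧ ∀ i ∈ R, v i = 0 := by
  have : Fintype R := Fintype.ofFinite R
  let restrict : K →ₗ[F] (R → F) := (LinearMap.funLeft F F ((↑) : R → ι)).comp K.subtype
  have hdim : finrank F (R → F) < finrank F K := by
    rwa [finrank_fintype_fun_eq_card, ← Nat.card_eq_fintype_card, Nat.card_coe_set_eq]
  obtain ⟨v, hv, hv0⟩ := (Submodule.ne_bot_iff _).1 (LinearMap.ker_ne_bot_of_finrank_lt hdim)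
  have hrestrict : restrict v = 0 := hv
  exact ⟨v, v.2, fun h0 => hv0 (Subtype.ext h0), fun i hi => congrFun hrestrict ⟨i, hi⟩⟩

namespace Matrix

variable {F m n : Type*} [Field F] [Fintype n]

theorem rank_pos_of_ne_zero [DecidableEq n] {N : Matrix m n F} (hN : N ≠ 0) : 0 < N.rank := by
  refine Nat.pos_of_ne_zero fun h => hN ?_
  have : LinearMap.range N.mulVecLin = ⊥ := Submodule.finrank_eq_zero.1 h
  rw [LinearMap.range_eq_bot] at this
  exact Matrix.toLin'.injective (this.trans (map_zero _).symm)

variable [Fintype m]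

theorem rank_le_ncard_add_rank (B C : Matrix m n F) (s : Set m)
    (h : ∀ i ∉ s, B i ∈ span F (range C)) : B.rank ≤ s.ncard + C.rank := by
  classical
  obtain ⟨s, rfl⟩ := s.toFinite.exists_finset_coe
  have hle : span F (range B.row) ≤
      span F (s.image B.row : Set (n → F)) ⊔ span F (range C.row) := by
    refine span_le.2 ?_
    rintro _ ⟨i, rfl⟩
    by_cases hi : i ∈ s
    · exact mem_sup_left (subset_span (Finset.mem_image_of_mem _ hi))
    · exact mem_sup_right (h i hi)
  have hsup := finrank_add_le_finrank_add_finrank (span F (s.image B.row : Set (n → F)))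
    (span F (range C.row))
  have hs : finrank F (span F (s.image B.row : Set (n → F))) ≤ s.card :=
    (finrank_span_finset_le_card _).trans Finset.card_image_le
  rw [ncard_coe_finset, rank_eq_finrank_span_row B, rank_eq_finrank_span_row C]
  have := finrank_mono hle
  omega

theorem rank_le_ncard_inter_add_rank_sub (B C : Matrix m n F) :
    B.rank ≤ ({i | C i ≠ 0} ∩ {i | B i ≠ 0}).ncard + (B - C).rank := by
  refine rank_le_ncard_add_rank B (B - C) _ fun i hi => ?_
  by_cases hC : C i = 0
  · exact subset_span ⟨i, funext fun j => by simp [congrFun hC j]⟩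
  · have hB : B i = 0 := by simpa [hC] using hi
    simp [hB]

end Matrix

open Matrix

theorem rank_le_l20 {n L : ℕ} (B : Matrix (Fin n) (Fin L) ℂ) : B.rank ≤ l20 B := by
  simpa [l20] using B.rank_le_ncard_add_rank 0 {i | B i ≠ 0} fun i hi => by simp_all

theorem l20_sub_add_ncard_inter_le {n L : ℕ} (X₀ X : Matrix (Fin n) (Fin L) ℂ) :
    l20 (X₀ - X) + ({i | X i ≠ 0} ∩ {i | X₀ i ≠ 0}).ncard ≤ l20 X + l20 X₀ := by
  have hsub : {i | (X₀ - X) i ≠ 0} ⊆ {i | X i ≠ 0} ∪ {i | X₀ i ≠ 0} := by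
    intro i hi
    by_contra h
    simp only [mem_union, mem_ofPred_eq, not_or, not_not] at h
    exact hi (funext fun j => by simp [congrFun h.1 j, congrFun h.2 j])
  have := ncard_le_ncard hsub (toFinite _)
  have := ncard_union_add_ncard_inter {i | X i ≠ 0} {i | X₀ i ≠ 0}
  unfold l20
  omega

theorem exists_mulVec_ne_zero_l0_add_rank_le {n L : ℕ} {N : Matrix (Fin n) (Fin L) ℂ}
    (hN : N ≠ 0) : ∃ c, N *ᵥ c ≠ 0 ∧ l0 (N *ᵥ c) + N.rank ≤ l20 N + 1 := by
  set T : Set (Fin n) := {i | N i ≠ 0}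
  have hd := rank_pos_of_ne_zero hN
  have hdT : N.rank ≤ T.ncard := rank_le_l20 N
  obtain ⟨R, hRT, hR⟩ := T.exists_subset_card_eq (n := N.rank - 1) (by omega)
  obtain ⟨_, ⟨c, rfl⟩, hv, hvR⟩ :=
    (LinearMap.range N.mulVecLin).exists_ne_zero_forall_eq_zero_of_ncard_lt_finrank R
      (by rw [hR]; exact Nat.sub_lt hd one_pos)
  refine ⟨c, hv, ?_⟩
  have hsupp : {j | (N *ᵥ c) j ≠ 0} ⊆ T \ R := fun j hj =>
    ⟨fun hNj => hj (by simp [mulVec, dotProduct, hNj]), fun hjR => hj (hvR j hjR)⟩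
  have := ncard_le_ncard hsupp (toFinite _)
  rw [ncard_sdiff hRT, hR] at this
  change {j | (N *ᵥ c) j ≠ 0}.ncard + N.rank ≤ T.ncard + 1
  omega

theorem sparkM_le_l0 {M n : ℕ} {A : Matrix (Fin M) (Fin n) ℂ} {v : Fin n → ℂ} (hv : v ≠ 0)
    (hAv : A *ᵥ v = 0) : sparkM A ≤ l0 v :=
  sInf_le ⟨v, hv, hAv, rfl⟩

theorem stmt3 {M n L : ℕ} (A : Matrix (Fin M) (Fin n) ℂ)
    (X₀ : Matrix (Fin n) (Fin L) ℂ)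
    (Y : Matrix (Fin M) (Fin L) ℂ) (hY : Y = A * X₀)
    (hcond : ((2 * l20 X₀ : ℕ) : ℕ∞) < sparkM A - 1 + (Y.rank : ℕ∞)) :
    ∀ X : Matrix (Fin n) (Fin L) ℂ, A * X = Y → l20 X ≤ l20 X₀ → X = X₀ := by
  intro X hX hle
  by_contra hne
  have hN : X₀ - X ≠ 0 := sub_ne_zero.2 (Ne.symm hne)
  have hAN : A * (X₀ - X) = 0 := by rw [Matrix.mul_sub, ← hY, hX, sub_self]
  obtain ⟨c, hv, hl0⟩ := exists_mulVec_ne_zero_l0_add_rank_le hN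
  have hspark := sparkM_le_l0 hv (by rw [mulVec_mulVec, hAN, zero_mulVec])
  have hrank : Y.rank ≤ ({i | X i ≠ 0} ∩ {i | X₀ i ≠ 0}).ncard + (X₀ - X).rank := by
    rw [hY]
    exact (rank_mul_le_right A X₀).trans (X₀.rank_le_ncard_inter_add_rank_sub X)
  have hcount := l20_sub_add_ncard_inter_le X₀ X
  have hNrows := rank_le_l20 (X₀ - X)
  refine hcond.not_ge ?_
  calc sparkM A - 1 + Y.rank ≤ ((l0 ((X₀ - X) *ᵥ c) - 1 + Y.rank : ℕ) : ℕ∞) := by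
        rw [ENat.natCast_add, ENat.natCast_sub, ENat.natCast_one]
        gcongr
    _ ≤ ((2 * l20 X₀ : ℕ) : ℕ∞) := by exact_mod_cast (by omega)
end

section
/- For every z ∈ ℂ^N and all m, n ≥ 1 with m + n = N + 1, one has ‖z‖_{𝒜',0} ≥ rank(H(z)), where H(z) is the m×n Hankel matrix built from z. -/
/-
A sum of `K` atoms `s • a'(φ)` has Hankel matrix `H(z) = A * B` with `A i k = s_k φ_k ^ i` and
`B k j = φ_k ^ j`, since `φ ^ (i + j) = φ ^ i * φ ^ j`; a product through `ℂ^K` has rank at most `K`.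
Some decomposition exists (an invertible Vandermonde matrix at `N` distinct nodes), so the
infimum defining the atomic ℓ0 norm is attained.
-/

open Matrix

/-- The atom `a'(φ) = (1, φ, φ², …, φ^{N−1})ᵀ`. -/
noncomputable def powVec (N : ℕ) (φ : ℂ) : Fin N → ℂ := fun j => φ ^ (j : ℕ)

/-- The atomic ℓ0 norm of `z ∈ ℂ^N` with respect to the atom set
`𝒜' = {a'(φ) : φ ∈ ℂ}`. -/
noncomputable def atomL0' {N : ℕ} (z : Fin N → ℂ) : ℕ :=
  sInf {K : ℕ | ∃ (φ : Fin K → ℂ) (s : Fin K → ℂ), z = ∑ k, s k • powVec N (φ k)}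

/-- The `m × n` Hankel matrix built from `z ∈ ℂ^N`, where `m + n = N + 1`. -/
noncomputable def hankel {N m n : ℕ} (h : m + n = N + 1) (z : Fin N → ℂ) :
    Matrix (Fin m) (Fin n) ℂ :=
  Matrix.of fun j k => z ⟨(j : ℕ) + (k : ℕ), by
    have hj := j.isLt; have hk := k.isLt; omega⟩

theorem vecMul_vandermonde_eq_sum_smul_powVec {N : ℕ} (v s : Fin N → ℂ) :
    s ᵥ* vandermonde v = ∑ k, s k • powVec N (v k) := by
  ext j
  simp [vecMul, dotProduct, vandermonde_apply, powVec, Finset.sum_apply]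

theorem exists_eq_sum_smul_powVec {N : ℕ} (z : Fin N → ℂ) :
    ∃ φ s : Fin N → ℂ, z = ∑ k, s k • powVec N (φ k) := by
  have hinj : Function.Injective (fun k : Fin N => ((k : ℕ) : ℂ)) :=
    fun a b hab => Fin.ext (Nat.cast_injective hab)
  have hunit : IsUnit (vandermonde fun k : Fin N => ((k : ℕ) : ℂ)) := by
    rw [isUnit_iff_isUnit_det]
    exact (det_vandermonde_ne_zero_iff.mpr hinj).isUnit
  obtain ⟨s, hs⟩ := vecMul_surjective_iff_isUnit.mpr hunit z
  exact ⟨_, s, hs.symm.trans (vecMul_vandermonde_eq_sum_smul_powVec _ s)⟩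

theorem exists_eq_sum_smul_powVec_atomL0' {N : ℕ} (z : Fin N → ℂ) :
    ∃ φ s : Fin (atomL0' z) → ℂ, z = ∑ k, s k • powVec N (φ k) := by
  obtain ⟨φ, s, hz⟩ := exists_eq_sum_smul_powVec z
  exact Nat.sInf_mem (s := {K | ∃ φ s : Fin K → ℂ, z = ∑ k, s k • powVec N (φ k)})
    ⟨N, φ, s, hz⟩

theorem hankel_sum_smul_powVec {N m n K : ℕ} (h : m + n = N + 1) (φ s : Fin K → ℂ) :
    hankel h (∑ k, s k • powVec N (φ k)) =
      (of fun i k => s k * φ k ^ (i : ℕ) : Matrix (Fin m) (Fin K) ℂ) *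
        (of fun k j => φ k ^ (j : ℕ) : Matrix (Fin K) (Fin n) ℂ) := by
  ext i j
  simp only [hankel, of_apply, Finset.sum_apply, Pi.smul_apply, smul_eq_mul, powVec, mul_apply,
    pow_add, mul_assoc]

theorem rank_hankel_le_of_eq_sum_smul_powVec {N m n K : ℕ} (h : m + n = N + 1)
    {z : Fin N → ℂ} {φ s : Fin K → ℂ} (hz : z = ∑ k, s k • powVec N (φ k)) :
    (hankel h z).rank ≤ K := by
  rw [hz, hankel_sum_smul_powVec]
  exact (rank_mul_le_right _ _).trans ((rank_le_card_height _).trans_eq (Fintype.card_fin K))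

theorem stmt10_general {N m n : ℕ} (h : m + n = N + 1)
    (z : Fin N → ℂ) :
    (hankel h z).rank ≤ atomL0' z := by
  obtain ⟨φ, s, hz⟩ := exists_eq_sum_smul_powVec_atomL0' z
  exact rank_hankel_le_of_eq_sum_smul_powVec h hz

/-- The atomic ℓ0 norm w.r.t. `𝒜'` dominates the rank of the Hankel matrix. -/
theorem stmt10 {N m n : ℕ} (hm : 1 ≤ m) (hn : 1 ≤ n) (h : m + n = N + 1)
    (z : Fin N → ℂ) :
    (hankel h z).rank ≤ atomL0' z :=
  stmt10_general h z
end

section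
/- Fix Ω ⊆ {0,…,N−1} of cardinality M, data Y_Ω ∈ ℂ^{M×L}, η ≥ 0 and λ' > 0, and consider the following three optimization problems over (X, u, Z) with X ∈ ℂ^{L×L} Hermitian, u ∈ ℂ^N, Z ∈ ℂ^{N×L}, all subject to the (L+N)×(L+N) block matrix [[X, Z^H],[Z, T(u)]] being positive semidefinite: (P1) minimize tr(X) + tr(T(u)) subject to ‖Z_Ω − Y_Ω‖_F ≤ η; (P2) minimize λ'·tr(X) + λ'·tr(T(u)) + ‖Z_Ω − Y_Ω‖_F²; (P3) minimize tr(X) + tr(T(u)) subject to Z_Ω = Y_Ω. Let Ỹ_Ω ∈ ℂ^{M×L'} satisfy Ỹ_Ω·(Ỹ_Ω)^H = Y_Ω·(Y_Ω)^H, and let (P̃1), (P̃2), (P̃3) denote the same problems with Y_Ω replaced by Ỹ_Ω (with Z ∈ ℂ^{N×L'} and X ∈ ℂ^{L'×L'}). Then for each i ∈ {1,2,3}, a vector u ∈ ℂ^N belongs to some optimal solution of (Pi) if and only if it belongs to some optimal solution of (P̃i). Moreover, if Q ∈ ℂ^{L×L'} satisfies Q^H Q = I_{L'} and Ỹ_Ω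 = Y_Ω·Q, and (X̂, û, Ẑ) is an optimal solution of (P̃i), then (Q·X̂·Q^H, û, Ẑ·Q^H) is an optimal solution of (Pi). -/
open Matrix
open scoped ComplexOrder

/-- The Hermitian Toeplitz matrix whose first row is `u`. -/
noncomputable def Toep {N : ℕ} (u : Fin N → ℂ) : Matrix (Fin N) (Fin N) ℂ :=
  Matrix.of fun j k =>
    if (j : ℕ) ≤ (k : ℕ) then u ⟨(k : ℕ) - (j : ℕ), Nat.lt_of_le_of_lt (Nat.sub_le _ _) k.isLt⟩
    else star (u ⟨(j : ℕ) - (k : ℕ), Nat.lt_of_le_of_lt (Nat.sub_le _ _) j.isLt⟩)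

/-- The Frobenius norm of a complex matrix. -/
noncomputable def frob {m n : Type*} [Fintype m] [Fintype n] (A : Matrix m n ℂ) : ℝ :=
  Real.sqrt (∑ i, ∑ j, Complex.normSq (A i j))

/-- The submatrix of rows indexed by `Ω`. -/
noncomputable def rowsOn {N : ℕ} (Ω : Finset (Fin N)) {L : ℕ}
    (Z : Matrix (Fin N) (Fin L) ℂ) : Matrix {x // x ∈ Ω} (Fin L) ℂ :=
  Matrix.of fun i l => Z i.1 l

/-- The common semidefinite feasibility constraint. -/
def sdpFeas {N L : ℕ} (X : Matrix (Fin L) (Fin L) ℂ) (u : Fin N → ℂ)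
    (Z : Matrix (Fin N) (Fin L) ℂ) : Prop :=
  X.IsHermitian ∧ (Matrix.fromBlocks X Zᴴ Z (Toep u)).PosSemidef

/-- The trace objective `tr X + tr T(u)` (both traces are real on the feasible set). -/
noncomputable def objTr {N L : ℕ} (X : Matrix (Fin L) (Fin L) ℂ) (u : Fin N → ℂ) : ℝ :=
  X.trace.re + (Toep u).trace.re

/-- Feasibility for problem `i ∈ {0,1,2}` (corresponding to (P1), (P2), (P3)). -/
noncomputable def pFeas {N L : ℕ} (Ω : Finset (Fin N)) (Y : Matrix {x // x ∈ Ω} (Fin L) ℂ)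
    (η : ℝ) (i : Fin 3) (X : Matrix (Fin L) (Fin L) ℂ) (u : Fin N → ℂ)
    (Z : Matrix (Fin N) (Fin L) ℂ) : Prop :=
  sdpFeas X u Z ∧ (i = 0 → frob (rowsOn Ω Z - Y) ≤ η) ∧ (i = 2 → rowsOn Ω Z = Y)

/-- Objective for problem `i ∈ {0,1,2}` (corresponding to (P1), (P2), (P3)). -/
noncomputable def pObj {N L : ℕ} (Ω : Finset (Fin N)) (Y : Matrix {x // x ∈ Ω} (Fin L) ℂ)
    (lam : ℝ) (i : Fin 3) (X : Matrix (Fin L) (Fin L) ℂ) (u : Fin N → ℂ)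
    (Z : Matrix (Fin N) (Fin L) ℂ) : ℝ :=
  if i = 1 then lam * objTr X u + (frob (rowsOn Ω Z - Y)) ^ 2 else objTr X u

/-- `(X, u, Z)` is an optimal solution of problem `i`. -/
noncomputable def isOpt {N L : ℕ} (Ω : Finset (Fin N)) (Y : Matrix {x // x ∈ Ω} (Fin L) ℂ)
    (η lam : ℝ) (i : Fin 3) (X : Matrix (Fin L) (Fin L) ℂ) (u : Fin N → ℂ)
    (Z : Matrix (Fin N) (Fin L) ℂ) : Prop :=
  pFeas Ω Y η i X u Z ∧
    ∀ X' u' Z', pFeas Ω Y η i X' u' Z' → pObj Ω Y lam i X u Z ≤ pObj Ω Y lam i X' u' Z'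

/-!
If `A Aᴴ = B Bᴴ`, then `B = A D` for the contraction `D = Aᴴ (A Aᴴ)⁺ B` (`1 - D Dᴴ ⪰ 0`).
Conjugating the block matrix by `diag(D, 1)` shows that `(X, u, Z) ↦ (Dᴴ X D, u, Z D)` preserves
the semidefinite constraint; it does not increase `tr X`, since
`tr X - tr (Dᴴ X D) = tr (X^{1/2} (1 - D Dᴴ) X^{1/2}) ≥ 0`, nor the residual, since
`Z_Ω D - Y_Ω = (Z_Ω - Ỹ_Ω) D` when `Y_Ω = Ỹ_Ω D`. With contractions in both directions between
`Y_Ω` and `Ỹ_Ω`, each problem maps into the other without increasing the objective, so optimal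
solutions are carried to optimal solutions. An isometry `Q` with `Ỹ_Ω = Y_Ω Q` also satisfies
`Ỹ_Ω Qᴴ = Y_Ω`, and `Qᴴ` is such a contraction.
-/

namespace Matrix

variable {m n p : Type*} [Fintype n] [Fintype p]

theorem mul_mul_conjTranspose_eq_self [DecidableEq p] {Y : Matrix m n ℂ} {Q : Matrix n p ℂ}
    (hQ : Qᴴ * Q = 1) (h : Y * Q * (Y * Q)ᴴ = Y * Yᴴ) : Y * Q * Qᴴ = Y := by
  have hQ' : ∀ M : Matrix p m ℂ, Qᴴ * (Q * M) = M := fun M => by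
    rw [← Matrix.mul_assoc, hQ, Matrix.one_mul]
  have h' : Y * (Q * (Qᴴ * Yᴴ)) = Y * Yᴴ := by
    simpa only [conjTranspose_mul, Matrix.mul_assoc] using h
  have hzero : (Y - Y * Q * Qᴴ) * (Y - Y * Q * Qᴴ)ᴴ = 0 := by
    simp only [Matrix.sub_mul, Matrix.mul_sub, conjTranspose_sub, conjTranspose_mul,
      conjTranspose_conjTranspose, Matrix.mul_assoc, hQ', h', sub_self]
  rw [self_mul_conjTranspose_eq_zero, sub_eq_zero] at hzero
  exact hzero.symm

variable [Fintype m]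

/-- Since `0⁻¹ = 0`, applying `x ↦ x⁻¹` to the eigenvalues gives the Moore–Penrose
pseudo-inverse; every function is continuous on the finite spectrum. -/
theorem IsHermitian.exists_pinv [DecidableEq m] {G : Matrix m m ℂ} (hG : G.IsHermitian) :
    ∃ H : Matrix m m ℂ, H.IsHermitian ∧ G * H * G = G ∧ H * G * H = H := by
  have hcont : ContinuousOn (·⁻¹ : ℝ → ℝ) (spectrum ℝ G) :=
    G.finite_real_spectrum.continuousOn _
  have hid : cfc (fun x : ℝ => x) G = G := cfc_id' ℝ G hG.isSelfAdjoint
  refine ⟨cfc (·⁻¹ : ℝ → ℝ) G, cfc_predicate _ G, ?_, ?_⟩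
  · nth_rw 1 3 [← hid]
    rw [← cfc_mul _ _ G, ← cfc_mul _ _ G]
    simpa using hid
  · nth_rw 2 [← hid]
    rw [← cfc_mul _ _ G, ← cfc_mul _ _ G]
    simpa using congr(cfc $(funext fun x : ℝ => mul_inv_mul_cancel x⁻¹) G)

theorem posSemidef_one_sub_of_idempotent [DecidableEq n] {R : Matrix n n ℂ} (hR : R.IsHermitian)
    (hRR : R * R = R) : (1 - R).PosSemidef := by
  have h : (1 - R)ᴴ * (1 - R) = 1 - R := by
    rw [conjTranspose_sub, conjTranspose_one, hR.eq]
    simp only [sub_mul, mul_sub, one_mul, mul_one, hRR, sub_self, sub_zero]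
  exact h ▸ posSemidef_conjTranspose_mul_self _

theorem exists_mul_eq_of_mul_conjTranspose_eq [DecidableEq m] [DecidableEq n]
    {A : Matrix m n ℂ} {B : Matrix m p ℂ} (h : A * Aᴴ = B * Bᴴ) : ∃ D : Matrix n p ℂ, A * D = B ∧ (1 - D * Dᴴ).PosSemidef := by
  obtain ⟨H, hH, hGHG, hHGH⟩ := (isHermitian_mul_conjTranspose_self A).exists_pinv
  -- `B` lies in the range of `B Bᴴ = A Aᴴ`, and `D Dᴴ = Aᴴ (A Aᴴ)⁺ A` is a projection.
  refine ⟨Aᴴ * H * B, ?_, ?_⟩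
  · have hzero : ((1 - A * Aᴴ * H) * B) * ((1 - A * Aᴴ * H) * B)ᴴ = 0 := by
      rw [conjTranspose_mul, Matrix.mul_assoc, ← Matrix.mul_assoc B, ← h, ← Matrix.mul_assoc,
        Matrix.sub_mul, Matrix.one_mul, hGHG, sub_self, Matrix.zero_mul]
    rw [self_mul_conjTranspose_eq_zero, Matrix.sub_mul, Matrix.one_mul, sub_eq_zero] at hzero
    simpa only [Matrix.mul_assoc] using hzero.symm
  · have hDD : Aᴴ * H * B * (Aᴴ * H * B)ᴴ = Aᴴ * H * A :=
      calc Aᴴ * H * B * (Aᴴ * H * B)ᴴ = Aᴴ * (H * (B * Bᴴ) * H) * A := by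
            simp only [conjTranspose_mul, hH.eq, conjTranspose_conjTranspose, Matrix.mul_assoc]
        _ = Aᴴ * H * A := by rw [← h, hHGH, Matrix.mul_assoc]
    have hproj : Aᴴ * H * A * (Aᴴ * H * A) = Aᴴ * H * A :=
      calc Aᴴ * H * A * (Aᴴ * H * A) = Aᴴ * (H * (A * Aᴴ) * H) * A := by
            simp only [Matrix.mul_assoc]
        _ = Aᴴ * H * A := by rw [hHGH, Matrix.mul_assoc]
    rw [hDD]
    exact posSemidef_one_sub_of_idempotent (isHermitian_conjTranspose_mul_mul A hH) hproj

theorem trace_mul_conjTranspose_self (A : Matrix m n ℂ) :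
    (A * Aᴴ).trace = ((∑ i, ∑ j, Complex.normSq (A i j) : ℝ) : ℂ) := by
  simp [trace, mul_apply, Complex.mul_conj]

theorem trace_mul_mul_conjTranspose_le [DecidableEq n] {D : Matrix n p ℂ}
    (hD : (1 - D * Dᴴ).PosSemidef) (M : Matrix m n ℂ) :
    (M * D * (M * D)ᴴ).trace ≤ (M * Mᴴ).trace := by
  have h := (hD.mul_mul_conjTranspose_same M).trace_nonneg
  rw [Matrix.mul_sub, Matrix.sub_mul, Matrix.mul_one, trace_sub, sub_nonneg] at h
  simpa only [conjTranspose_mul, Matrix.mul_assoc] using h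

theorem trace_conjTranspose_mul_mul_le [DecidableEq n] {X : Matrix n n ℂ} (hX : X.PosSemidef)
    {D : Matrix n p ℂ} (hD : (1 - D * Dᴴ).PosSemidef) : (Dᴴ * X * D).trace ≤ X.trace := by
  open scoped MatrixOrder in
  obtain ⟨B, rfl⟩ := CStarAlgebra.nonneg_iff_eq_star_mul_self.mp hX.nonneg
  rw [star_eq_conjTranspose]
  have h : Dᴴ * (Bᴴ * B) * D = (B * D)ᴴ * (B * D) := by
    simp only [conjTranspose_mul, Matrix.mul_assoc]
  rw [h, trace_mul_comm, trace_mul_comm Bᴴ]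
  exact trace_mul_mul_conjTranspose_le hD B

end Matrix

theorem frob_eq_sqrt_re_trace {m n : Type*} [Fintype m] [Fintype n] (A : Matrix m n ℂ) :
    frob A = √(A * Aᴴ).trace.re := by
  rw [frob, trace_mul_conjTranspose_self, Complex.ofReal_re]

theorem frob_nonneg {m n : Type*} [Fintype m] [Fintype n] (A : Matrix m n ℂ) : 0 ≤ frob A :=
  Real.sqrt_nonneg _

theorem frob_mul_le {m n p : Type*} [Fintype m] [Fintype n] [Fintype p] [DecidableEq n]
    {D : Matrix n p ℂ} (hD : (1 - D * Dᴴ).PosSemidef) (A : Matrix m n ℂ) :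
    frob (A * D) ≤ frob A := by
  rw [frob_eq_sqrt_re_trace, frob_eq_sqrt_re_trace]
  exact Real.sqrt_le_sqrt (Complex.le_def.mp (trace_mul_mul_conjTranspose_le hD A)).1

section Transfer

variable {N a b : ℕ} {Ω : Finset (Fin N)} {u : Fin N → ℂ}

theorem sdpFeas.posSemidef {X : Matrix (Fin a) (Fin a) ℂ} {Z : Matrix (Fin N) (Fin a) ℂ}
    (hs : sdpFeas X u Z) : X.PosSemidef :=
  hs.2.submatrix Sum.inl

theorem sdpFeas.conj {X : Matrix (Fin a) (Fin a) ℂ} {Z : Matrix (Fin N) (Fin a) ℂ}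
    (hs : sdpFeas X u Z) (D : Matrix (Fin a) (Fin b) ℂ) :
    sdpFeas (Dᴴ * X * D) u (Z * D) := by
  refine ⟨isHermitian_conjTranspose_mul_mul D hs.1, ?_⟩
  have h := hs.2.conjTranspose_mul_mul_same (fromBlocks D 0 0 (1 : Matrix (Fin N) (Fin N) ℂ))
  simpa [fromBlocks_conjTranspose, fromBlocks_multiply, conjTranspose_mul, Matrix.mul_assoc]
    using h

theorem objTr_conj_le {X : Matrix (Fin a) (Fin a) ℂ} {Z : Matrix (Fin N) (Fin a) ℂ}
    (hs : sdpFeas X u Z) {D : Matrix (Fin a) (Fin b) ℂ} (hD : (1 - D * Dᴴ).PosSemidef) :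
    objTr (Dᴴ * X * D) u ≤ objTr X u :=
  add_le_add_left (Complex.le_def.mp (trace_conjTranspose_mul_mul_le hs.posSemidef hD)).1 _

variable {Y : Matrix {x // x ∈ Ω} (Fin b) ℂ} {Yt : Matrix {x // x ∈ Ω} (Fin a) ℂ}
  {D : Matrix (Fin a) (Fin b) ℂ} {η lam : ℝ} {i : Fin 3}
  {X : Matrix (Fin a) (Fin a) ℂ} {Z : Matrix (Fin N) (Fin a) ℂ}

theorem frob_rowsOn_mul_sub_le (hYt : Yt * D = Y) (hD : (1 - D * Dᴴ).PosSemidef) :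
    frob (rowsOn Ω (Z * D) - Y) ≤ frob (rowsOn Ω Z - Yt) := by
  rw [← hYt, show rowsOn Ω (Z * D) = rowsOn Ω Z * D from rfl, ← Matrix.sub_mul]
  exact frob_mul_le hD _

theorem pFeas.conj (hf : pFeas Ω Yt η i X u Z) (hYt : Yt * D = Y)
    (hD : (1 - D * Dᴴ).PosSemidef) : pFeas Ω Y η i (Dᴴ * X * D) u (Z * D) := by
  obtain ⟨hs, hfrob, hrows⟩ := hf
  refine ⟨hs.conj D, fun hi => (frob_rowsOn_mul_sub_le hYt hD).trans (hfrob hi), fun hi => ?_⟩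
  rw [← hYt, ← hrows hi]
  rfl

theorem pObj_conj_le (hlam : 0 ≤ lam) (hs : sdpFeas X u Z) (hYt : Yt * D = Y)
    (hD : (1 - D * Dᴴ).PosSemidef) :
    pObj Ω Y lam i (Dᴴ * X * D) u (Z * D) ≤ pObj Ω Yt lam i X u Z := by
  unfold pObj
  split_ifs
  · gcongr
    · exact objTr_conj_le hs hD
    · exact frob_nonneg _
    · exact frob_rowsOn_mul_sub_le hYt hD
  · exact objTr_conj_le hs hD

theorem isOpt.conj (hlam : 0 ≤ lam) (hopt : isOpt Ω Yt η lam i X u Z) (hYt : Yt * D = Y)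
    (hD : (1 - D * Dᴴ).PosSemidef) {D' : Matrix (Fin b) (Fin a) ℂ} (hY : Y * D' = Yt)
    (hD' : (1 - D' * D'ᴴ).PosSemidef) : isOpt Ω Y η lam i (Dᴴ * X * D) u (Z * D) := by
  refine ⟨hopt.1.conj hYt hD, fun X' u' Z' hf' => ?_⟩
  calc pObj Ω Y lam i (Dᴴ * X * D) u (Z * D) ≤ pObj Ω Yt lam i X u Z :=
        pObj_conj_le hlam hopt.1.1 hYt hD
    _ ≤ pObj Ω Yt lam i (D'ᴴ * X' * D') u' (Z' * D') := hopt.2 _ _ _ (hf'.conj hY hD')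
    _ ≤ pObj Ω Y lam i X' u' Z' := pObj_conj_le hlam hf'.1 hY hD'

end Transfer

theorem stmt19_general {N L L' : ℕ} (Ω : Finset (Fin N))
    (Y : Matrix {x // x ∈ Ω} (Fin L) ℂ) (Yt : Matrix {x // x ∈ Ω} (Fin L') ℂ)
    (η lam : ℝ) (hlam : 0 < lam)
    (hYY : Y * Yᴴ = Yt * Ytᴴ) (i : Fin 3) :
    (∀ u : Fin N → ℂ,
      (∃ X Z, isOpt Ω Y η lam i X u Z) ↔ (∃ X Z, isOpt Ω Yt η lam i X u Z)) ∧
    (∀ Q : Matrix (Fin L) (Fin L') ℂ, Qᴴ * Q = 1 → Yt = Y * Q →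
      ∀ (X : Matrix (Fin L') (Fin L') ℂ) (u : Fin N → ℂ) (Z : Matrix (Fin N) (Fin L') ℂ),
        isOpt Ω Yt η lam i X u Z → isOpt Ω Y η lam i (Q * X * Qᴴ) u (Z * Qᴴ)) := by
  obtain ⟨D, hYD, hD⟩ := exists_mul_eq_of_mul_conjTranspose_eq hYY
  obtain ⟨D', hYtD', hD'⟩ := exists_mul_eq_of_mul_conjTranspose_eq hYY.symm
  refine ⟨fun u => ⟨fun ⟨X, Z, h⟩ => ⟨_, _, h.conj hlam.le hYD hD hYtD' hD'⟩,
    fun ⟨X, Z, h⟩ => ⟨_, _, h.conj hlam.le hYtD' hD' hYD hD⟩⟩, ?_⟩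
  rintro Q hQ rfl X u Z hopt
  have hYQ : Y * Q * Qᴴ = Y := mul_mul_conjTranspose_eq_self hQ hYY.symm
  have hQ' : (1 - Qᴴ * Qᴴᴴ).PosSemidef := by
    simpa [hQ] using PosSemidef.zero
  simpa using hopt.conj hlam.le hYQ hQ' hYD hD

/-- Dimensionality reduction for the three atomic-norm SDPs: replacing the data
`Y_Ω` by any `Ỹ_Ω` with the same outer product `Ỹ_Ω Ỹ_Ωᴴ = Y_Ω Y_Ωᴴ` preserves the
set of optimal `u`, and solutions transform via any isometry `Q` with `Ỹ_Ω = Y_Ω Q`. -/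
theorem stmt19 {N L L' : ℕ} (Ω : Finset (Fin N))
    (Y : Matrix {x // x ∈ Ω} (Fin L) ℂ) (Yt : Matrix {x // x ∈ Ω} (Fin L') ℂ)
    (η lam : ℝ) (hη : 0 ≤ η) (hlam : 0 < lam)
    (hYY : Y * Yᴴ = Yt * Ytᴴ) (i : Fin 3) :
    (∀ u : Fin N → ℂ,
      (∃ X Z, isOpt Ω Y η lam i X u Z) ↔ (∃ X Z, isOpt Ω Yt η lam i X u Z)) ∧
    (∀ Q : Matrix (Fin L) (Fin L') ℂ, Qᴴ * Q = 1 → Yt = Y * Q →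
      ∀ (X : Matrix (Fin L') (Fin L') ℂ) (u : Fin N → ℂ) (Z : Matrix (Fin N) (Fin L') ℂ),
        isOpt Ω Yt η lam i X u Z → isOpt Ω Y η lam i (Q * X * Qᴴ) u (Z * Qᴴ)) :=
  stmt19_general Ω Y Yt η lam hlam hYY i
end
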